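/- Let n ∈ ℤ₊, let ω ∈ ℝⁿ be rationally independent, let K be a compact Hausdorff topological space, F: 𝕋ⁿ → K a surjective continuous mapping, and 𝔊 a continuous action of ℝ on K such that F(φ + ωt) = 𝔊^t(F(φ)) for all φ ∈ 𝕋ⁿ and t ∈ ℝ. Then for all φ¹, φ² ∈ 𝕋ⁿ one has F(φ¹) = F(φ²) if and only if φ¹ − φ² ∈ F⁻¹({F(0)}). -/

import Mathlib

open scoped BigOperators

/-- The `n`-torus `(ℝ/2πℤ)ⁿ`. -/
abbrev Torus (n : ℕ) := Fin n → AddCircle (2 * Real.pi)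

/-- A vector `ω ∈ ℝⁿ` is rationally independent if `⟨ω,k⟩ ≠ 0` for all `k ∈ ℤⁿ \ {0}`. -/
def RationallyIndependent {n : ℕ} (ω : Fin n → ℝ) : Prop :=
  ∀ k : Fin n → ℤ, k ≠ 0 → (∑ i, (k i : ℝ) * ω i) ≠ 0

/-- The element `tω` of the torus, for `t ∈ ℝ` and `ω ∈ ℝⁿ`. -/
noncomputable def torusVec {n : ℕ} (ω : Fin n → ℝ) (t : ℝ) : Torus n :=
  fun i => ((t * ω i : ℝ) : AddCircle (2 * Real.pi))


/-!
The orbit `t ↦ tω` is dense in the torus (Kronecker). This follows from Weyl equidistribution: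
for a character `e_k` with `k ≠ 0` the time average of `e_k(tω) = exp(i⟨k,ω⟩t)` over `[0,T]` is
`O(1/T)` because `⟨k,ω⟩ ≠ 0`, so time averages converge to space averages on trigonometric
polynomials, and then on all continuous functions since these are dense and the averaging maps
are uniformly `1`-Lipschitz. A continuous function vanishing on the orbit must then have integral
zero, which forces the orbit to be dense.

If `F φ₁ = F φ₂`, the semiconjugacy gives `F (φ₁ + tω) = F (φ₂ + tω)` for all `t`; the set of `χ`
with `F (φ₁ + χ) = F (φ₂ + χ)` is closed and contains the orbit, hence is everything. Taking
`χ = -φ₂`, resp. applying this to `φ₁ - φ₂` and `0` with `χ = φ₂`, gives both directions.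
-/

open Filter Topology MeasureTheory Set

theorem Continuous.map_add_eq_map_add_of_denseRange {G K T : Type*} [TopologicalSpace G] [Add G]
    [ContinuousAdd G] [TopologicalSpace K] [T2Space K] {F : G → K} (hF : Continuous F)
    {v : T → G} (hv : DenseRange v) {Φ : T → K → K} (hconj : ∀ φ t, F (φ + v t) = Φ t (F φ))
    {ψ₁ ψ₂ : G} (h : F ψ₁ = F ψ₂) (χ : G) : F (ψ₁ + χ) = F (ψ₂ + χ) := by
  have hclosed : IsClosed {χ | F (ψ₁ + χ) = F (ψ₂ + χ)} :=
    isClosed_eq (hF.comp (continuous_const.add continuous_id))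
      (hF.comp (continuous_const.add continuous_id))
  have hrange : range v ⊆ {χ | F (ψ₁ + χ) = F (ψ₂ + χ)} := by
    rintro - ⟨t, rfl⟩
    simp only [mem_ofPred_eq, hconj, h]
  exact hclosed.closure_subset (hv.mono hrange χ)

theorem Equicontinuous.tendsto_of_dense_span {ι 𝕜 E F : Type*} [Semiring 𝕜] [TopologicalSpace E]
    [AddCommMonoid E] [Module 𝕜 E] [UniformSpace F] [AddCommGroup F] [IsUniformAddGroup F]
    [Module 𝕜 F] [ContinuousConstSMul 𝕜 F] {l : Filter ι} {A : ι → E →ₗ[𝕜] F} {L : E →ₗ[𝕜] F}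
    (hA : Equicontinuous fun i ↦ ⇑(A i)) (hL : Continuous L) {s : Set E}
    (hs : Dense (Submodule.span 𝕜 s : Set E)) (h : ∀ x ∈ s, Tendsto (A · x) l (𝓝 (L x)))
    (x : E) : Tendsto (A · x) l (𝓝 (L x)) := by
  let S : Submodule 𝕜 E :=
    { carrier := {x | Tendsto (A · x) l (𝓝 (L x))}
      add_mem' := fun {x y} hx hy ↦ by simpa only [mem_ofPred_eq, map_add] using hx.add hy
      zero_mem' := by simpa only [mem_ofPred_eq, map_zero] using tendsto_const_nhds
      smul_mem' := fun c x hx ↦ by simpa only [mem_ofPred_eq, map_smul] using hx.const_smul c }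
  have hspan : Submodule.span 𝕜 s ≤ S := Submodule.span_le.2 h
  exact (hA.isClosed_setOfPred_tendsto hL).closure_subset (hs.mono hspan x)

section Averages

variable {X : Type*} [TopologicalSpace X]

noncomputable def timeAverage (γ : C(ℝ, X)) (T : ℝ) : C(X, ℂ) →ₗ[ℂ] ℂ where
  toFun f := (T : ℂ)⁻¹ * ∫ t in 0..T, f (γ t)
  map_add' f g := by
    have hint (h : C(X, ℂ)) : IntervalIntegrable (fun t ↦ h (γ t)) volume 0 T :=
      (h.comp γ).continuous.intervalIntegrable 0 T
    simp only [ContinuousMap.add_apply, intervalIntegral.integral_add (hint f) (hint g), mul_add]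
  map_smul' c f := by
    simp only [ContinuousMap.smul_apply, smul_eq_mul, intervalIntegral.integral_const_mul,
      RingHom.id_apply]
    ring

theorem timeAverage_apply (γ : C(ℝ, X)) (T : ℝ) (f : C(X, ℂ)) :
    timeAverage γ T f = (T : ℂ)⁻¹ * ∫ t in 0..T, f (γ t) := rfl

theorem norm_timeAverage_le [CompactSpace X] (γ : C(ℝ, X)) (T : ℝ) (f : C(X, ℂ)) :
    ‖timeAverage γ T f‖ ≤ ‖f‖ := by
  have hbound : ∀ t ∈ uIoc 0 T, ‖f (γ t)‖ ≤ ‖f‖ := fun t _ ↦ f.norm_coe_le_norm (γ t)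
  calc ‖timeAverage γ T f‖ ≤ |T|⁻¹ * (‖f‖ * |T - 0|) := by
        rw [timeAverage_apply, norm_mul, norm_inv, Complex.norm_real, Real.norm_eq_abs]
        gcongr
        exact intervalIntegral.norm_integral_le_of_norm_le_const hbound
    _ ≤ ‖f‖ := by
        rcases eq_or_ne T 0 with rfl | hT
        · simp
        · rw [sub_zero, mul_comm ‖f‖, ← mul_assoc, inv_mul_cancel₀ (abs_ne_zero.2 hT), one_mul]

theorem equicontinuous_timeAverage [CompactSpace X] (γ : C(ℝ, X)) :
    Equicontinuous fun T ↦ ⇑(timeAverage γ T) :=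
  (LipschitzWith.uniformEquicontinuous _ 1 fun T ↦ by
    simpa using AddMonoidHomClass.lipschitz_of_bound (timeAverage γ T) 1 fun f ↦ by
      simpa using norm_timeAverage_le γ T f).equicontinuous

variable [MeasurableSpace X] [OpensMeasurableSpace X] [CompactSpace X]

noncomputable def integralLinearMap (μ : Measure X) [IsFiniteMeasure μ] : C(X, ℂ) →ₗ[ℂ] ℂ where
  toFun f := ∫ x, f x ∂μ
  map_add' f g := integral_add (f.continuous.integrable_of_hasCompactSupport
    (.of_compactSpace f)) (g.continuous.integrable_of_hasCompactSupport (.of_compactSpace g))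
  map_smul' c f := integral_smul c f

theorem continuous_integralLinearMap (μ : Measure X) [IsFiniteMeasure μ] :
    Continuous (integralLinearMap μ) :=
  (AddMonoidHomClass.lipschitz_of_bound (integralLinearMap μ) (μ.real univ) fun f ↦ by
    rw [mul_comm]
    exact norm_integral_le_of_norm_le_const (.of_forall fun x ↦ f.norm_coe_le_norm x)).continuous

theorem denseRange_of_tendsto_timeAverage [T2Space X] (μ : Measure X) [IsFiniteMeasure μ]
    [μ.IsOpenPosMeasure] (γ : C(ℝ, X))
    (h : ∀ f : C(X, ℂ), Tendsto (fun T ↦ timeAverage γ T f) atTop (𝓝 (∫ x, f x ∂μ))) :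
    DenseRange γ := by
  by_contra hγ
  obtain ⟨p, hp⟩ : ∃ p, p ∉ closure (range γ) := by simpa [DenseRange, Dense] using hγ
  obtain ⟨f, hf0, hf1, hf01⟩ := exists_continuous_zero_one_of_isClosed isClosed_closure
    isClosed_singleton (disjoint_singleton_right.2 hp)
  let g : C(X, ℂ) := ⟨fun x ↦ (f x : ℂ), by fun_prop⟩
  have hg : ∀ T, timeAverage γ T g = 0 := fun T ↦ by
    simp [timeAverage_apply, g, hf0 (subset_closure (mem_range_self _))]
  have hint : ∫ x, f x ∂μ = 0 := by
    have h0 : ∫ x, (f x : ℂ) ∂μ = 0 :=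
      tendsto_nhds_unique (h g) (by simpa only [hg] using tendsto_const_nhds)
    rw [integral_complex_ofReal] at h0
    exact_mod_cast h0
  have hfp : f p ≠ 0 := by simp [hf1 (mem_singleton p)]
  exact (f.continuous.integral_pos_of_hasCompactSupport_nonneg_nonzero (.of_compactSpace f)
    (fun x ↦ (hf01 x).1) hfp).ne' hint

end Averages

theorem tendsto_average_exp_ofReal_mul_I {a : ℝ} (ha : a ≠ 0) :
    Tendsto (fun T : ℝ ↦ (T : ℂ)⁻¹ * ∫ t in 0..T, Complex.exp (a * Complex.I * t)) atTop (𝓝 0) := by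
  have hc : (a : ℂ) * Complex.I ≠ 0 := mul_ne_zero (by exact_mod_cast ha) Complex.I_ne_zero
  have hinv : Tendsto (fun T : ℝ ↦ (T : ℂ)⁻¹) atTop (𝓝 0) := by
    simpa only [Function.comp_def, Complex.ofReal_inv, Complex.ofReal_zero] using
      (Complex.continuous_ofReal.tendsto 0).comp tendsto_inv_atTop_zero
  refine hinv.zero_mul_isBoundedUnder_le (isBoundedUnder_of ⟨2 / ‖(a : ℂ) * Complex.I‖, fun T ↦ ?_⟩)
  dsimp only [Function.comp_apply]
  rw [integral_exp_mul_complex hc, norm_div]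
  gcongr
  calc ‖Complex.exp (a * Complex.I * T) - Complex.exp (a * Complex.I * (0 : ℝ))‖
      ≤ ‖Complex.exp (a * Complex.I * T)‖ + ‖Complex.exp (a * Complex.I * (0 : ℝ))‖ :=
        norm_sub_le _ _
    _ = 2 := by
        rw [mul_right_comm, ← Complex.ofReal_mul, Complex.norm_exp_ofReal_mul_I]
        norm_num

namespace UnitAddTorus

variable {d : Type*} [Fintype d]

instance : IsProbabilityMeasure (volume : Measure (UnitAddTorus d)) :=
  ⟨by simp [volume_pi, Measure.pi_univ, AddCircle.measure_univ]⟩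

noncomputable def linearFlow (ω : d → ℝ) : C(ℝ, UnitAddTorus d) :=
  ⟨fun t i ↦ ((t * ω i : ℝ) : UnitAddCircle), by fun_prop⟩

theorem mFourier_linearFlow (n : d → ℤ) (ω : d → ℝ) (t : ℝ) :
    mFourier n (linearFlow ω t) =
      Complex.exp ((2 * Real.pi * ∑ i, n i * ω i : ℝ) * Complex.I * t) := by
  simp only [mFourier, linearFlow, ContinuousMap.coe_mk, fourier_coe_apply, ← Complex.exp_sum]
  congr 1
  push_cast
  rw [Finset.mul_sum, Finset.sum_mul, Finset.sum_mul]
  refine Finset.sum_congr rfl fun i _ ↦ ?_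
  ring

theorem integral_mFourier_of_ne_zero {n : d → ℤ} (hn : n ≠ 0) : ∫ x, mFourier n x = 0 := by
  obtain ⟨i, hni⟩ := Function.ne_iff.1 hn
  have hi : ∫ x : UnitAddCircle, fourier (n i) x = 0 :=
    integral_eq_zero_of_add_right_eq_neg (fourier_add_half_inv_index hni one_pos)
  simp only [mFourier, ContinuousMap.coe_mk]
  rw [volume_pi, integral_fintype_prod_eq_prod]
  exact Finset.prod_eq_zero (Finset.mem_univ i) hi

variable {ω : d → ℝ}

theorem tendsto_timeAverage_mFourier (hω : ∀ k : d → ℤ, k ≠ 0 → ∑ i, (k i : ℝ) * ω i ≠ 0)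
    (n : d → ℤ) :
    Tendsto (fun T ↦ timeAverage (linearFlow ω) T (mFourier n)) atTop
      (𝓝 (∫ x, mFourier n x)) := by
  rcases eq_or_ne n 0 with rfl | hn
  · refine tendsto_const_nhds.congr' ?_
    filter_upwards [eventually_ne_atTop 0] with T hT
    simp [timeAverage_apply, mFourier_zero, hT]
  · have ha : 2 * Real.pi * ∑ i, n i * ω i ≠ 0 := mul_ne_zero Real.two_pi_pos.ne' (hω n hn)
    simpa only [integral_mFourier_of_ne_zero hn, timeAverage_apply, mFourier_linearFlow]
      using tendsto_average_exp_ofReal_mul_I ha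

theorem tendsto_timeAverage_linearFlow
    (hω : ∀ k : d → ℤ, k ≠ 0 → ∑ i, (k i : ℝ) * ω i ≠ 0) (f : C(UnitAddTorus d, ℂ)) :
    Tendsto (fun T ↦ timeAverage (linearFlow ω) T f) atTop (𝓝 (∫ x, f x)) :=
  (equicontinuous_timeAverage _).tendsto_of_dense_span (L := integralLinearMap volume)
    (continuous_integralLinearMap volume)
    (Submodule.dense_iff_topologicalClosure_eq_top.2 span_mFourier_closure_eq_top)
    (by rintro _ ⟨n, rfl⟩; exact tendsto_timeAverage_mFourier hω n) f

theorem denseRange_linearFlow (hω : ∀ k : d → ℤ, k ≠ 0 → ∑ i, (k i : ℝ) * ω i ≠ 0) :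
    DenseRange (linearFlow ω) :=
  denseRange_of_tendsto_timeAverage volume _ (tendsto_timeAverage_linearFlow hω)

end UnitAddTorus

theorem denseRange_torusVec {n : ℕ} {ω : Fin n → ℝ} (hω : RationallyIndependent ω) :
    DenseRange (torusVec ω) := by
  let e : UnitAddTorus (Fin n) ≃ₜ Torus n := .piCongrRight fun _ ↦
    AddCircle.homeomorphAddCircle 1 (2 * Real.pi) one_ne_zero Real.two_pi_pos.ne'
  refine (e.surjective.denseRange.comp (UnitAddTorus.denseRange_linearFlow hω) e.continuous).mono
    (range_subset_iff.2 fun t ↦ ⟨2 * Real.pi * t, funext fun i ↦ ?_⟩)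
  simp only [torusVec, UnitAddTorus.linearFlow, ContinuousMap.coe_mk, Function.comp_apply,
    Homeomorph.piCongrRight_apply, AddCircle.homeomorphAddCircle_apply_mk, inv_one, one_mul, e]
  congr 1
  ring

theorem fiber_of_factor_of_quasiperiodic_flow_general
    (n : ℕ) (ω : Fin n → ℝ) (hω : RationallyIndependent ω)
    (K : Type*) [TopologicalSpace K] [T2Space K]
    (F : Torus n → K) (hFcont : Continuous F)
    (𝔊 : ℝ → K → K)
    (hconj : ∀ (φ : Torus n) (t : ℝ), F (φ + torusVec ω t) = 𝔊 t (F φ)) :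
    ∀ φ₁ φ₂ : Torus n, F φ₁ = F φ₂ ↔ φ₁ - φ₂ ∈ F ⁻¹' {F 0} := by
  have hshift {ψ₁ ψ₂ : Torus n} (h : F ψ₁ = F ψ₂) (χ : Torus n) : F (ψ₁ + χ) = F (ψ₂ + χ) :=
    hFcont.map_add_eq_map_add_of_denseRange (denseRange_torusVec hω) hconj h χ
  intro φ₁ φ₂
  rw [mem_preimage, mem_singleton_iff]
  constructor
  · intro h
    simpa [sub_eq_add_neg] using hshift h (-φ₂)
  · intro h
    simpa using hshift h φ₂

/-- if `F : 𝕋ⁿ → K` is a continuous surjection onto a compact Hausdorff space `K`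
semiconjugating the quasi-periodic flow `φ ↦ φ + ωt` (with `ω` rationally independent) to a
continuous flow `𝔊` on `K`, then `F φ¹ = F φ²` iff `φ¹ - φ² ∈ F⁻¹({F 0})`. -/
theorem fiber_of_factor_of_quasiperiodic_flow
    (n : ℕ) (ω : Fin n → ℝ) (hω : RationallyIndependent ω)
    (K : Type*) [TopologicalSpace K] [CompactSpace K] [T2Space K]
    (F : Torus n → K) (hFcont : Continuous F) (hFsurj : Function.Surjective F)
    (𝔊 : ℝ → K → K)
    (h𝔊cont : Continuous fun q : ℝ × K => 𝔊 q.1 q.2)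
    (h𝔊zero : ∀ κ : K, 𝔊 0 κ = κ)
    (h𝔊add : ∀ t s : ℝ, ∀ κ : K, 𝔊 (t + s) κ = 𝔊 t (𝔊 s κ))
    (hconj : ∀ (φ : Torus n) (t : ℝ), F (φ + torusVec ω t) = 𝔊 t (F φ)) :
    ∀ φ₁ φ₂ : Torus n, F φ₁ = F φ₂ ↔ φ₁ - φ₂ ∈ F ⁻¹' {F 0} :=
  fiber_of_factor_of_quasiperiodic_flow_general n ω hω K F hFcont 𝔊 hconj
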